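/- arXiv:1407.4756 — 3 statements merged into one kernel-verified Lean document; each statement's English description precedes it below -/
import Mathlib

section
/- Let u : [R, ∞) → ℝ be a C² solution of the self-expander graph equation u'' = (1 + (u')²)(u - x u') with u > 0 and u' < 0 on [R, ∞), where R > 0. Then the function v = u - x u' is strictly positive and satisfies v' = -x(1 + (u')²) v ≤ -x v on [R, ∞); consequently v(x) ≤ v(R) e^{(R² - x²)/2} for all x ≥ R. -/
open Real Set

/-- For a solution of the self-expander graph ODE u'' = (1+(u')²)(u - x u') with
u > 0, u' < 0 on [R, ∞), R > 0, the function v = u - x u' is strictly positive,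
satisfies v' = -x(1+(u')²)v ≤ -x v, and consequently v(x) ≤ v(R) e^{(R²-x²)/2}. -/
theorem self_expander_v_decay (R : ℝ) (hR : 0 < R) (u u' u'' : ℝ → ℝ)
    (hu1 : ∀ x ∈ Ici R, HasDerivAt u (u' x) x)
    (hu2 : ∀ x ∈ Ici R, HasDerivAt u' (u'' x) x)
    (heq : ∀ x ∈ Ici R, u'' x = (1 + (u' x) ^ 2) * (u x - x * u' x))
    (hpos : ∀ x ∈ Ici R, 0 < u x)
    (hneg : ∀ x ∈ Ici R, u' x < 0) :
    ∀ x ∈ Ici R,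
      0 < u x - x * u' x ∧
      HasDerivAt (fun y => u y - y * u' y)
        (-(x * (1 + (u' x) ^ 2) * (u x - x * u' x))) x ∧
      -(x * (1 + (u' x) ^ 2) * (u x - x * u' x)) ≤ -(x * (u x - x * u' x)) ∧
      u x - x * u' x ≤ (u R - R * u' R) * Real.exp ((R ^ 2 - x ^ 2) / 2) := by
  set v : ℝ → ℝ := fun y => u y - y * u' y with hv_def
  have hvpos : ∀ x ∈ Ici R, 0 < v x := by
    intro x hx
    have hx0 : 0 < x := lt_of_lt_of_le hR hx
    have := hpos x hx
    have := hneg x hx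
    simp only [hv_def]
    nlinarith
  have hv' : ∀ x ∈ Ici R, HasDerivAt v (-(x * (1 + (u' x) ^ 2) * (v x))) x := by
    intro x hx
    have h : HasDerivAt v (u' x - (1 * u' x + x * u'' x)) x :=
      (hu1 x hx).sub ((hasDerivAt_id x).mul (hu2 x hx))
    convert h using 1
    rw [heq x hx]
    simp only [hv_def]
    ring
  -- g = v * exp(x^2/2)
  set g : ℝ → ℝ := fun y => v y * Real.exp (y ^ 2 / 2) with hg_def
  have hexp : ∀ x : ℝ, HasDerivAt (fun y => Real.exp (y ^ 2 / 2)) (Real.exp (x ^ 2 / 2) * x) x := by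
    intro x
    have h1 : HasDerivAt (fun y : ℝ => y ^ 2 / 2) ((2 * x ^ 1) / 2) x :=
      (hasDerivAt_pow 2 x).div_const 2
    have h2 := h1.exp
    convert h2 using 1
    ring
  have hg' : ∀ x ∈ Ici R, HasDerivAt g
      ((-(x * (1 + (u' x) ^ 2) * (v x))) * Real.exp (x ^ 2 / 2)
        + v x * (Real.exp (x ^ 2 / 2) * x)) x := by
    intro x hx
    exact (hv' x hx).mul (hexp x)
  have hgderiv_nonpos : ∀ x ∈ Ici R,
      (-(x * (1 + (u' x) ^ 2) * (v x))) * Real.exp (x ^ 2 / 2)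
        + v x * (Real.exp (x ^ 2 / 2) * x) ≤ 0 := by
    intro x hx
    have hx0 : 0 < x := lt_of_lt_of_le hR hx
    have hv0 := hvpos x hx
    have he := Real.exp_pos (x ^ 2 / 2)
    have : (-(x * (1 + (u' x) ^ 2) * (v x))) * Real.exp (x ^ 2 / 2)
        + v x * (Real.exp (x ^ 2 / 2) * x)
        = -(x * (u' x) ^ 2 * v x) * Real.exp (x ^ 2 / 2) := by ring
    rw [this]
    have h0 : 0 ≤ x * (u' x) ^ 2 * v x := by positivity
    nlinarith [mul_nonneg h0 he.le]
  have hanti : AntitoneOn g (Ici R) := by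
    apply antitoneOn_of_deriv_nonpos (convex_Ici R)
    · intro x hx
      exact ((hv' x hx).mul (hexp x)).continuousAt.continuousWithinAt
    · intro x hx
      rw [interior_Ici] at hx
      exact (hg' x (mem_Ici.mpr (le_of_lt hx))).differentiableAt.differentiableWithinAt
    · intro x hx
      rw [interior_Ici] at hx
      rw [(hg' x (mem_Ici.mpr (le_of_lt hx))).deriv]
      exact hgderiv_nonpos x (mem_Ici.mpr (le_of_lt hx))
  intro x hx
  have hx0 : 0 < x := lt_of_lt_of_le hR hx
  refine ⟨hvpos x hx, hv' x hx, ?_, ?_⟩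
  · have hv0 : 0 < u x - x * u' x := hvpos x hx
    nlinarith [mul_nonneg (mul_nonneg hx0.le (sq_nonneg (u' x))) hv0.le]
  · have hgle : g x ≤ g R := hanti (self_mem_Ici) hx hx
    have he : 0 < Real.exp (x ^ 2 / 2) := Real.exp_pos _
    have key : v x * Real.exp (x ^ 2 / 2) ≤ v R * Real.exp (R ^ 2 / 2) := hgle
    have heq2 : (u R - R * u' R) * Real.exp ((R ^ 2 - x ^ 2) / 2)
        = (v R * Real.exp (R ^ 2 / 2)) / Real.exp (x ^ 2 / 2) := by
      rw [eq_div_iff (ne_of_gt he), hv_def]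
      rw [show (R ^ 2 - x ^ 2) / 2 = R ^ 2 / 2 - x ^ 2 / 2 by ring, Real.exp_sub]
      field_simp
    show v x ≤ _
    rw [heq2, le_div_iff₀ he]
    exact key
end

section
/- Let u : [R, ∞) → ℝ be a C² solution of u'' = (1 + (u')²)(u - x u') with u > 0 and u' < 0 on [R, ∞), where R ≥ 1. Then there exists a constant C₁ > 0, depending only on R, u(R) and u'(R), such that u(x) ≤ C₁ e^{-x²/2} and |u'(x)| ≤ C₁ x^{-1} e^{-x²/2} for all x ≥ R. -/
open Real Set

/-- For a solution of u'' = (1+(u')²)(u - x u') with u > 0 and u' < 0 on [R,∞),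
R ≥ 1, there is C₁ > 0 (depending only on R, u(R), u'(R)) with
u(x) ≤ C₁ e^{-x²/2} and |u'(x)| ≤ C₁ x⁻¹ e^{-x²/2} for all x ≥ R. -/
theorem self_expander_u_decay (R : ℝ) (hR : 1 ≤ R) (u u' u'' : ℝ → ℝ)
    (hu1 : ∀ x ∈ Ici R, HasDerivAt u (u' x) x)
    (hu2 : ∀ x ∈ Ici R, HasDerivAt u' (u'' x) x)
    (heq : ∀ x ∈ Ici R, u'' x = (1 + (u' x) ^ 2) * (u x - x * u' x))
    (hpos : ∀ x ∈ Ici R, 0 < u x)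
    (hneg : ∀ x ∈ Ici R, u' x < 0) :
    ∃ C₁ > 0, ∀ x ∈ Ici R,
      u x ≤ C₁ * Real.exp (-x ^ 2 / 2) ∧
      |u' x| ≤ C₁ * x⁻¹ * Real.exp (-x ^ 2 / 2) := by
  set v : ℝ → ℝ := fun x => u x - x * u' x with hv
  set w : ℝ → ℝ := fun x => v x * Real.exp (x ^ 2 / 2) with hw
  have hvpos : ∀ x ∈ Ici R, 0 < v x := by
    intro x hx
    have hx0 : (0:ℝ) < x := lt_of_lt_of_le (by linarith) hx
    have := hpos x hx
    have := hneg x hx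
    have : 0 < x * (-(u' x)) := mul_pos hx0 (by linarith)
    simp only [hv]
    nlinarith
  -- derivative of w
  have hwderiv : ∀ x ∈ Ici R,
      HasDerivAt w (-(x * (u' x) ^ 2 * v x) * Real.exp (x ^ 2 / 2)) x := by
    intro x hx
    have hvd : HasDerivAt v (-(x * u'' x)) x := by
      have h1 : HasDerivAt (fun y => y * u' y) (1 * u' x + x * u'' x) x :=
        (hasDerivAt_id x).mul (hu2 x hx)
      have := (hu1 x hx).sub h1
      refine HasDerivAt.congr_deriv this ?_
      ring
    have hed : HasDerivAt (fun y : ℝ => Real.exp (y ^ 2 / 2))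
        (Real.exp (x ^ 2 / 2) * x) x := by
      have h1 : HasDerivAt (fun y : ℝ => y ^ 2 / 2) x x := by
        have h := (hasDerivAt_pow 2 x).div_const 2
        refine HasDerivAt.congr_deriv h ?_
        push_cast
        ring
      exact h1.exp
    have := hvd.mul hed
    refine HasDerivAt.congr_deriv this ?_
    have he := heq x hx
    simp only [hw, hv] at *
    rw [he]
    ring
  -- w is antitone on Ici R
  have hcont : ContinuousOn w (Ici R) := fun x hx => ((hwderiv x hx).continuousAt).continuousWithinAt
  have hmono : AntitoneOn w (Ici R) := by
    apply antitoneOn_of_deriv_nonpos (convex_Ici R) hcont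
    · intro x hx
      rw [interior_Ici] at hx
      exact ((hwderiv x (le_of_lt hx : R ≤ x)).differentiableAt).differentiableWithinAt
    · intro x hx
      rw [interior_Ici] at hx
      rw [(hwderiv x (le_of_lt hx : R ≤ x)).deriv]
      have hx0 : (0:ℝ) < x := lt_of_lt_of_le (by linarith) (le_of_lt hx)
      have hvx := hvpos x (le_of_lt hx : R ≤ x)
      have : 0 ≤ x * (u' x) ^ 2 * v x :=
        mul_nonneg (mul_nonneg hx0.le (sq_nonneg _)) hvx.le
      have hE := (Real.exp_pos (x ^ 2 / 2)).le
      nlinarith [mul_nonneg this hE]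
  refine ⟨(u R - R * u' R) * Real.exp (R ^ 2 / 2), ?_, ?_⟩
  · have := hvpos R (le_refl R)
    simp only [hv] at this
    exact mul_pos this (Real.exp_pos _)
  intro x hx
  have hx0 : (0:ℝ) < x := lt_of_lt_of_le (by linarith) hx
  have hkey : v x * Real.exp (x ^ 2 / 2) ≤ (u R - R * u' R) * Real.exp (R ^ 2 / 2) := by
    have := hmono (self_mem_Ici) hx hx
    simpa [hw, hv] using this
  have hmul : Real.exp (x ^ 2 / 2) * Real.exp (-x ^ 2 / 2) = 1 := by
    have h0 : x ^ 2 / 2 + -x ^ 2 / 2 = 0 := by ring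
    rw [← Real.exp_add, h0, Real.exp_zero]
  have hvbound : v x ≤ (u R - R * u' R) * Real.exp (R ^ 2 / 2) * Real.exp (-x ^ 2 / 2) := by
    calc v x = v x * Real.exp (x ^ 2 / 2) * Real.exp (-x ^ 2 / 2) := by
          rw [mul_assoc, hmul, mul_one]
      _ ≤ (u R - R * u' R) * Real.exp (R ^ 2 / 2) * Real.exp (-x ^ 2 / 2) :=
          mul_le_mul_of_nonneg_right hkey (Real.exp_pos _).le
  simp only [hv] at hvbound
  constructor
  · have h1 := hneg x hx
    nlinarith [mul_pos hx0 (neg_pos.mpr h1)]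
  · have habs : |u' x| = -(u' x) := abs_of_neg (hneg x hx)
    rw [habs]
    have hxv : x * (-(u' x)) ≤ u x - x * u' x := by
      have := hpos x hx
      nlinarith
    rw [show (u R - R * u' R) * Real.exp (R ^ 2 / 2) * x⁻¹ * Real.exp (-x ^ 2 / 2)
        = ((u R - R * u' R) * Real.exp (R ^ 2 / 2) * Real.exp (-x ^ 2 / 2)) * x⁻¹ by ring,
      ← div_eq_mul_inv, le_div_iff₀ hx0]
    nlinarith
end

section
/- Let α : [R, ∞) → ℝ be a C² function satisfying α'' = (1 + (u')²)(α - x α') + 2 u' α' (u - x u') on [R, ∞) for some C¹ function u with u' ≤ 0 and u - x u' ≥ 0, and suppose lim_{x→∞} (|α(x)| + |α'(x)|) = 0. Then α cannot attain a strictly negative local minimum and cannot attain a strictly positive local maximum in the interior of [R, ∞). -/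
open Real Set Filter

/-- Second derivative test (necessary direction): at a local minimum, the
second derivative is nonnegative. -/
lemma secondDeriv_nonneg_of_isLocalMin {f f' f'' : ℝ → ℝ} {x₀ : ℝ}
    (hf : ∀ᶠ x in nhds x₀, HasDerivAt f (f' x) x)
    (hf' : HasDerivAt f' (f'' x₀) x₀)
    (hmin : IsLocalMin f x₀) : 0 ≤ f'' x₀ := by
  have h0 : f' x₀ = 0 := hmin.hasDerivAt_eq_zero hf.self_of_nhds
  by_contra hcon
  push_neg at hcon
  -- slope of f' tends to f'' x₀ < 0, so f' < 0 just to the right of x₀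
  have hslope : Tendsto (slope f' x₀) (nhdsWithin x₀ (Ioi x₀)) (nhds (f'' x₀)) :=
    (hasDerivAt_iff_tendsto_slope.mp hf').mono_left
      (nhdsWithin_mono _ (fun x hx => ne_of_gt hx))
  have h1 : ∀ᶠ x in nhdsWithin x₀ (Ioi x₀), slope f' x₀ x < 0 :=
    hslope.eventually_lt_const hcon
  have h2 : ∀ᶠ x in nhdsWithin x₀ (Ioi x₀), f' x < 0 := by
    filter_upwards [h1, self_mem_nhdsWithin] with x hx hmem
    have hxx : (0:ℝ) < x - x₀ := sub_pos.mpr hmem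
    have heq : slope f' x₀ x = f' x / (x - x₀) := by
      rw [slope_def_field, h0, sub_zero]
    rw [heq, div_neg_iff] at hx
    rcases hx with ⟨h, h'⟩ | ⟨h, h'⟩
    · linarith
    · exact h
  have h3 : ∀ᶠ x in nhdsWithin x₀ (Ioi x₀), f x₀ ≤ f x :=
    hmin.filter_mono nhdsWithin_le_nhds
  obtain ⟨ε, hε, hball⟩ := Metric.eventually_nhds_iff.mp hf
  have h4 : Iio (x₀ + ε) ∈ nhdsWithin x₀ (Ioi x₀) :=
    nhdsWithin_le_nhds (Iio_mem_nhds (by linarith))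
  obtain ⟨b, hb, hsub⟩ := mem_nhdsGT_iff_exists_Ioc_subset.mp
    ((h2.and h3).and (eventually_of_mem h4 (fun x hx => hx)))
  have hbb : b ∈ Ioc x₀ b := ⟨hb, le_refl b⟩
  obtain ⟨⟨hb1, hb2⟩, hb3⟩ := hsub hbb
  -- f is differentiable near [x₀, b] with negative derivative on (x₀, b)
  have hIcc : ∀ y ∈ Icc x₀ b, HasDerivAt f (f' y) y := by
    intro y hy
    apply hball
    rw [Real.dist_eq, abs_lt]
    exact ⟨by linarith [hy.1], by linarith [hy.2, mem_Iio.mp hb3]⟩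
  have hanti : StrictAntiOn f (Icc x₀ b) := by
    apply strictAntiOn_of_deriv_neg (convex_Icc x₀ b)
    · exact fun y hy => (hIcc y hy).continuousAt.continuousWithinAt
    · intro y hy
      rw [interior_Icc] at hy
      rw [(hIcc y ⟨hy.1.le, hy.2.le⟩).deriv]
      exact (hsub ⟨hy.1, hy.2.le⟩).1.1
  have : f b < f x₀ := hanti ⟨le_refl x₀, hb.le⟩ ⟨hb.le, le_refl b⟩ hb
  linarith

/-- A solution α of the linearized self-expander equation
α'' = (1+(u')²)(α - xα') + 2u'α'(u - xu') on [R,∞), with u' ≤ 0, u - xu' ≥ 0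
and |α| + |α'| → 0 at infinity, cannot attain a strictly negative local minimum
nor a strictly positive local maximum in the interior of [R,∞). -/
theorem linearized_self_expander_max_principle (R : ℝ)
    (u u' α α' α'' : ℝ → ℝ)
    (hu' : ∀ x ∈ Ici R, u' x ≤ 0)
    (huv : ∀ x ∈ Ici R, 0 ≤ u x - x * u' x)
    (hα1 : ∀ x ∈ Ici R, HasDerivAt α (α' x) x)
    (hα2 : ∀ x ∈ Ici R, HasDerivAt α' (α'' x) x)
    (heq : ∀ x ∈ Ici R, α'' x =
      (1 + (u' x) ^ 2) * (α x - x * α' x) + 2 * u' x * α' x * (u x - x * u' x))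
    (hlim : Tendsto (fun x => |α x| + |α' x|) atTop (nhds 0)) :
    ∀ x₀, R < x₀ →
      ¬(IsLocalMin α x₀ ∧ α x₀ < 0) ∧ ¬(IsLocalMax α x₀ ∧ 0 < α x₀) := by
  intro x₀ hx₀
  have hmem : x₀ ∈ Ici R := le_of_lt hx₀
  have hev : ∀ᶠ x in nhds x₀, HasDerivAt α (α' x) x :=
    (eventually_gt_nhds hx₀).mono (fun x hx => hα1 x hx.le)
  have hsq : (0:ℝ) < 1 + (u' x₀) ^ 2 := by positivity
  constructor
  · rintro ⟨hmin, hneg⟩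
    have h0 : α' x₀ = 0 := hmin.hasDerivAt_eq_zero (hα1 x₀ hmem)
    have hval : α'' x₀ = (1 + (u' x₀) ^ 2) * α x₀ := by
      rw [heq x₀ hmem, h0]; ring
    have h2 : 0 ≤ α'' x₀ :=
      secondDeriv_nonneg_of_isLocalMin hev (hα2 x₀ hmem) hmin
    nlinarith
  · rintro ⟨hmax, hpos⟩
    have hmin : IsLocalMin (fun x => -α x) x₀ := hmax.neg
    have hev' : ∀ᶠ x in nhds x₀, HasDerivAt (fun x => -α x) (-α' x) x :=
      hev.mono (fun x hx => hx.neg)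
    have h0 : α' x₀ = 0 := by
      have := hmin.hasDerivAt_eq_zero hev'.self_of_nhds
      linarith [this]
    have hval : α'' x₀ = (1 + (u' x₀) ^ 2) * α x₀ := by
      rw [heq x₀ hmem, h0]; ring
    have h2 : 0 ≤ -α'' x₀ :=
      secondDeriv_nonneg_of_isLocalMin (f'' := fun x => -α'' x) hev' ((hα2 x₀ hmem).neg) hmin
    nlinarith
end
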